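/- Let G be a finite simple graph with vertex set V, let k ≤ m be positive integers, and let T ⊆ V be an m-dominating set with |Γ_T(Z)| ≥ k − 1 for every T-cut Z (T is (k−1)-connected). Let S ⊆ V \ T. If X is a (T ∪ S)-cut with |Γ_{T∪S}(X)| ≤ k − 1, then X ∩ T is a demand cut, i.e., X ∩ T is a T-cut and |Γ_T(X ∩ T)| = k − 1. -/

import Mathlib

/-!
Write `N = Γ_{T∪S}(X)`, so `|N| ≤ k - 1 < m`. A vertex outside `T` has at least `m` neighbours in
`T`, hence one outside `N`, i.e. one in `T` that is either in `X` or not in `X⁺`. Applied to a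
vertex of `X` this puts a vertex into `X ∩ T`; applied to a vertex of `(T ∪ S) \ X⁺` it yields a
vertex of `T \ (X ∩ T)⁺`. Finally `Γ_T(X ∩ T) ⊆ N`, so `k - 1`-connectivity of `T` pins down
`|Γ_T(X ∩ T)| = k - 1`.
-/

/-- `nbr G X` is Γ(X): the set of vertices outside `X` adjacent to a vertex of `X`. -/
def nbr {V : Type*} [Fintype V] [DecidableEq V] (G : SimpleGraph V) [DecidableRel G.Adj]
    (X : Finset V) : Finset V :=
  Finset.univ.filter (fun v => v ∉ X ∧ ∃ u ∈ X, G.Adj u v)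

/-- `cl G X` is X⁺ = X ∪ Γ(X). -/
def cl {V : Type*} [Fintype V] [DecidableEq V] (G : SimpleGraph V) [DecidableRel G.Adj]
    (X : Finset V) : Finset V :=
  X ∪ nbr G X

open Finset

theorem exists_adj_notMem_of_card_lt {V : Type*} {G : SimpleGraph V} [DecidableRel G.Adj]
    {T A : Finset V} {v : V} {m : ℕ}
    (hw : m ≤ (T.filter (fun u => G.Adj v u)).card) (hA : A.card < m) :
    ∃ u ∈ T, G.Adj v u ∧ u ∉ A := by
  obtain ⟨u, hu, huA⟩ := exists_mem_notMem_of_card_lt_card (hA.trans_le hw)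
  obtain ⟨huT, hvu⟩ := mem_filter.1 hu
  exact ⟨u, huT, hvu, huA⟩

section

variable {V : Type*} [Fintype V] [DecidableEq V] {G : SimpleGraph V} [DecidableRel G.Adj]
  {T U X Y : Finset V} {u v : V}

theorem mem_nbr : v ∈ nbr G X ↔ v ∉ X ∧ ∃ u ∈ X, G.Adj u v := by
  simp [nbr]

theorem mem_cl_of_adj (hu : u ∈ X) (huv : G.Adj u v) : v ∈ cl G X := by
  by_cases hv : v ∈ X
  · exact mem_union_left _ hv
  · exact mem_union_right _ (mem_nbr.2 ⟨hv, u, hu, huv⟩)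

theorem mem_nbr_of_subset (hYX : Y ⊆ X) (hv : v ∈ nbr G Y) (hvX : v ∉ X) : v ∈ nbr G X := by
  obtain ⟨-, u, hu, huv⟩ := mem_nbr.1 hv
  exact mem_nbr.2 ⟨hvX, u, hYX hu, huv⟩

theorem cl_mono (hYX : Y ⊆ X) : cl G Y ⊆ cl G X := by
  intro v hv
  by_cases hvX : v ∈ X
  · exact mem_union_left _ hvX
  · rcases mem_union.1 hv with hvY | hvY
    · exact absurd (hYX hvY) hvX
    · exact mem_union_right _ (mem_nbr_of_subset hYX hvY hvX)

theorem nbr_inter_inter_subset (hTU : T ⊆ U) : nbr G (X ∩ T) ∩ T ⊆ nbr G X ∩ U := by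
  intro v hv
  obtain ⟨hvn, hvT⟩ := mem_inter.1 hv
  have hvX : v ∉ X := fun hvX => (mem_nbr.1 hvn).1 (mem_inter.2 ⟨hvX, hvT⟩)
  exact mem_inter.2 ⟨mem_nbr_of_subset inter_subset_left hvn hvX, hTU hvT⟩

theorem inter_nonempty_of_forall_exists_adj_notMem_nbr
    (hesc : ∀ w ∉ T, ∃ u ∈ T, G.Adj w u ∧ u ∉ nbr G X) (hX : X.Nonempty) : (X ∩ T).Nonempty := by
  obtain ⟨v, hvX⟩ := hX
  by_cases hvT : v ∈ T
  · exact ⟨v, mem_inter.2 ⟨hvX, hvT⟩⟩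
  · obtain ⟨u, huT, hvu, hun⟩ := hesc v hvT
    have huX : u ∈ X := (mem_union.1 (mem_cl_of_adj hvX hvu)).resolve_right hun
    exact ⟨u, mem_inter.2 ⟨huX, huT⟩⟩

theorem sdiff_cl_inter_nonempty_of_forall_exists_adj_notMem_nbr
    (hesc : ∀ w ∉ T, ∃ u ∈ T, G.Adj w u ∧ u ∉ nbr G X) (hcut : (U \ cl G X).Nonempty) :
    (T \ cl G (X ∩ T)).Nonempty := by
  obtain ⟨w, hw⟩ := hcut
  obtain ⟨-, hwX⟩ := mem_sdiff.1 hw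
  have hcl : cl G (X ∩ T) ⊆ cl G X := cl_mono inter_subset_left
  by_cases hwT : w ∈ T
  · exact ⟨w, mem_sdiff.2 ⟨hwT, fun hwc => hwX (hcl hwc)⟩⟩
  · obtain ⟨u, huT, hwu, hun⟩ := hesc w hwT
    have huX : u ∉ X := fun huX => hwX (mem_cl_of_adj huX hwu.symm)
    have hu : u ∉ cl G X := fun hu => (mem_union.1 hu).elim huX hun
    exact ⟨u, mem_sdiff.2 ⟨huT, fun hu' => hu (hcl hu')⟩⟩

end

theorem stmt_4_general {V : Type*} [Fintype V] [DecidableEq V]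
    (G : SimpleGraph V) [DecidableRel G.Adj] (k m : ℕ) (hk : 1 ≤ k) (hkm : k ≤ m)
    -- T is an m-dominating set
    (T : Finset V)
    (hdom : ∀ v : V, v ∉ T → m ≤ (T.filter (fun u => G.Adj v u)).card)
    -- T is (k-1)-connected: |Γ_T(Z)| ≥ k-1 for every T-cut Z
    (hTconn : ∀ Z : Finset V, Z ⊆ T → Z.Nonempty → (T \ cl G Z).Nonempty →
      k - 1 ≤ (nbr G Z ∩ T).card)
    (S : Finset V)
    -- X is a (T ∪ S)-cut with |Γ_{T∪S}(X)| ≤ k-1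
    (X : Finset V) (hXne : X.Nonempty)
    (hXcut : ((T ∪ S) \ cl G X).Nonempty)
    (hXsmall : (nbr G X ∩ (T ∪ S)).card ≤ k - 1) :
    -- X ∩ T is a demand cut
    (X ∩ T ⊆ T ∧ (X ∩ T).Nonempty ∧ (T \ cl G (X ∩ T)).Nonempty) ∧
      (nbr G (X ∩ T) ∩ T).card = k - 1 := by
  have hN : (nbr G X ∩ (T ∪ S)).card < m := by omega
  have hesc : ∀ w ∉ T, ∃ u ∈ T, G.Adj w u ∧ u ∉ nbr G X := fun w hw => by
    obtain ⟨u, huT, hwu, huN⟩ := exists_adj_notMem_of_card_lt (hdom w hw) hN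
    exact ⟨u, huT, hwu, fun hu => huN (mem_inter.2 ⟨hu, mem_union_left _ huT⟩)⟩
  have hne := inter_nonempty_of_forall_exists_adj_notMem_nbr hesc hXne
  have hcut := sdiff_cl_inter_nonempty_of_forall_exists_adj_notMem_nbr hesc hXcut
  refine ⟨⟨inter_subset_right, hne, hcut⟩, le_antisymm ?_ (hTconn _ inter_subset_right hne hcut)⟩
  exact (card_le_card (nbr_inter_inter_subset subset_union_left)).trans hXsmall

theorem stmt_4 {V : Type*} [Fintype V] [DecidableEq V]
    (G : SimpleGraph V) [DecidableRel G.Adj] (k m : ℕ) (hk : 1 ≤ k) (hkm : k ≤ m)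
    -- T is an m-dominating set
    (T : Finset V)
    (hdom : ∀ v : V, v ∉ T → m ≤ (T.filter (fun u => G.Adj v u)).card)
    -- T is (k-1)-connected: |Γ_T(Z)| ≥ k-1 for every T-cut Z
    (hTconn : ∀ Z : Finset V, Z ⊆ T → Z.Nonempty → (T \ cl G Z).Nonempty →
      k - 1 ≤ (nbr G Z ∩ T).card)
    (S : Finset V) (hS : S ⊆ Finset.univ \ T)
    -- X is a (T ∪ S)-cut with |Γ_{T∪S}(X)| ≤ k-1
    (X : Finset V) (hXsub : X ⊆ T ∪ S) (hXne : X.Nonempty)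
    (hXcut : ((T ∪ S) \ cl G X).Nonempty)
    (hXsmall : (nbr G X ∩ (T ∪ S)).card ≤ k - 1) :
    -- X ∩ T is a demand cut
    (X ∩ T ⊆ T ∧ (X ∩ T).Nonempty ∧ (T \ cl G (X ∩ T)).Nonempty) ∧
      (nbr G (X ∩ T) ∩ T).card = k - 1 :=
  stmt_4_general G k m hk hkm T hdom hTconn S X hXne hXcut hXsmall
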